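/- Let x_1, ..., x_n be linearly independent unit vectors in ℝ^n, and for each i define T_i(∑_{j=1}^n α_j x_j) = (1/2) ∑_{j=1}^n α_j x_j + (1/2)(∑_{j=1}^n α_j) x_i. Then for every point y in convexHull {0, x_1, ..., x_n} there exists an index i ∈ {1, ..., n} such that ‖T_i(y)‖ ≥ ‖y‖ (Euclidean norms). -/

import Mathlib

/-!
Write `y = ∑ αⱼ xⱼ`, `s = ∑ αⱼ`, and take `i` maximising `⟪y, xᵢ⟫`. Then
`‖y‖² = ∑ αⱼ ⟪y, xⱼ⟫ ≤ s ⟪y, xᵢ⟫` and `‖y‖ ≤ s`, so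
`‖Tᵢ y‖² = ‖y‖²/4 + (s/2) ⟪y, xᵢ⟫ + s²/4 ≥ ‖y‖²/4 + ‖y‖²/2 + ‖y‖²/4 = ‖y‖²`.
-/

open scoped RealInnerProductSpace

section

variable {E : Type*} [NormedAddCommGroup E] [InnerProductSpace ℝ E]

theorem norm_le_norm_half_smul_add_of_sq_le_mul_inner {y u : E} {s : ℝ} (hu : ‖u‖ = 1)
    (hys : ‖y‖ ≤ s) (h : ‖y‖ ^ 2 ≤ s * ⟪y, u⟫) :
    ‖y‖ ≤ ‖(1 / 2 : ℝ) • y + ((1 / 2) * s) • u‖ := by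
  have hs : 0 ≤ s := (norm_nonneg y).trans hys
  have hexpand : ‖(1 / 2 : ℝ) • y + ((1 / 2) * s) • u‖ ^ 2
      = ‖y‖ ^ 2 / 4 + s / 2 * ⟪y, u⟫ + s ^ 2 / 4 := by
    rw [norm_add_sq_real, real_inner_smul_left, real_inner_smul_right, norm_smul, norm_smul, hu,
      Real.norm_of_nonneg (by norm_num), Real.norm_of_nonneg (by positivity)]
    ring
  rw [← sq_le_sq₀ (norm_nonneg _) (norm_nonneg _), hexpand]
  nlinarith [norm_nonneg y]

variable {ι : Type*} [Fintype ι]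

theorem norm_sum_smul_le_sum {α : ι → ℝ} {x : ι → E} (hα : ∀ j, 0 ≤ α j)
    (hx : ∀ j, ‖x j‖ ≤ 1) : ‖∑ j, α j • x j‖ ≤ ∑ j, α j :=
  norm_sum_le_of_le _ fun j _ => by
    simpa [norm_smul, Real.norm_of_nonneg (hα j)] using
      mul_le_mul_of_nonneg_left (hx j) (hα j)

theorem norm_sum_smul_sq_le_mul_inner {α : ι → ℝ} {x : ι → E} (hα : ∀ j, 0 ≤ α j) {i : ι}
    (hi : ∀ j, ⟪∑ k, α k • x k, x j⟫ ≤ ⟪∑ k, α k • x k, x i⟫) :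
    ‖∑ j, α j • x j‖ ^ 2 ≤ (∑ j, α j) * ⟪∑ k, α k • x k, x i⟫ := by
  calc ‖∑ j, α j • x j‖ ^ 2 = ∑ j, α j * ⟪∑ k, α k • x k, x j⟫ := by
        rw [← real_inner_self_eq_norm_sq, inner_sum]
        simp only [real_inner_smul_right]
    _ ≤ ∑ j, α j * ⟪∑ k, α k • x k, x i⟫ :=
        Finset.sum_le_sum fun j _ => mul_le_mul_of_nonneg_left (hi j) (hα j)
    _ = (∑ j, α j) * ⟪∑ k, α k • x k, x i⟫ := (Finset.sum_mul ..).symm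

end

theorem exists_index_norm_le_general (n : ℕ) (hn : 1 ≤ n)
    (x : Fin n → EuclideanSpace ℝ (Fin n))
    (hunit : ∀ i, ‖x i‖ = 1)
    (α : Fin n → ℝ) (hα : ∀ j, 0 ≤ α j) :
    ∃ i : Fin n,
      ‖∑ j, α j • x j‖ ≤
        ‖(1 / 2 : ℝ) • (∑ j, α j • x j) + ((1 / 2) * ∑ j, α j) • x i‖ := by
  have : Nonempty (Fin n) := ⟨⟨0, hn⟩⟩
  obtain ⟨i, hi⟩ := Finite.exists_max fun j => ⟪∑ k, α k • x k, x j⟫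
  exact ⟨i, norm_le_norm_half_smul_add_of_sq_le_mul_inner (hunit i)
    (norm_sum_smul_le_sum hα fun j => (hunit j).le) (norm_sum_smul_sq_le_mul_inner hα hi)⟩

theorem exists_index_norm_le (n : ℕ) (hn : 1 ≤ n)
    (x : Fin n → EuclideanSpace ℝ (Fin n))
    (hunit : ∀ i, ‖x i‖ = 1) (hli : LinearIndependent ℝ x)
    (α : Fin n → ℝ) (hα : ∀ j, 0 ≤ α j) (hsum : (∑ j, α j) ≤ 1) :
    ∃ i : Fin n,
      ‖∑ j, α j • x j‖ ≤
        ‖(1 / 2 : ℝ) • (∑ j, α j • x j) + ((1 / 2) * ∑ j, α j) • x i‖ :=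
  exists_index_norm_le_general n hn x hunit α hα
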